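/- For all t ≥ 0, √π · t · e^{t²} · erfc(t) < (2t² + 2)/(2t² + 3). -/

import Mathlib

open Real MeasureTheory Set Filter

/-- The complementary error function. -/
noncomputable def erfc (t : ℝ) : ℝ :=
  (2 / Real.sqrt π) * ∫ s in Set.Ioi t, Real.exp (-s ^ 2)

/-- Barrier function. -/
noncomputable def Wb (s : ℝ) : ℝ :=
  Real.exp (-s ^ 2) * ((s ^ 2 + 1) / (s * (2 * s ^ 2 + 3)))

/-- Its derivative. -/
noncomputable def Wb' (s : ℝ) : ℝ :=
  -Real.exp (-s ^ 2) * (1 + 3 / (s ^ 2 * (2 * s ^ 2 + 3) ^ 2))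

lemma Wb_hasDeriv {s : ℝ} (hs : 0 < s) : HasDerivAt Wb (Wb' s) s := by
  have hden : s * (2 * s ^ 2 + 3) ≠ 0 := by positivity
  have h1 : HasDerivAt (fun x : ℝ => Real.exp (-x ^ 2))
      (Real.exp (-s ^ 2) * (-(2 * s))) s := by
    have h := ((hasDerivAt_pow 2 s).neg).exp
    simpa using h
  have hnum : HasDerivAt (fun x : ℝ => x ^ 2 + 1) (2 * s) s := by
    simpa using (hasDerivAt_pow 2 s).add_const 1
  have hdenD : HasDerivAt (fun x : ℝ => x * (2 * x ^ 2 + 3)) (6 * s ^ 2 + 3) s := by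
    have h := (hasDerivAt_id s).mul (((hasDerivAt_pow 2 s).const_mul 2).add_const 3)
    refine h.congr_deriv ?_
    simp
    ring
  have hg := hnum.div hdenD hden
  have hw := h1.mul hg
  refine hw.congr_deriv ?_
  rw [Wb']
  have hs2 : s ^ 2 * (2 * s ^ 2 + 3) ^ 2 ≠ 0 := by positivity
  simp only [Pi.div_apply]
  field_simp
  ring

lemma Wb_tendsto : Tendsto Wb atTop (nhds 0) := by
  have hexp : Tendsto (fun s : ℝ => Real.exp (-s ^ 2)) atTop (nhds 0) := by
    apply Real.tendsto_exp_atBot.comp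
    rw [tendsto_neg_atBot_iff]
    exact tendsto_pow_atTop two_ne_zero
  apply squeeze_zero' (g := fun s : ℝ => Real.exp (-s ^ 2)) ?_ ?_ hexp
  · filter_upwards [eventually_ge_atTop (1 : ℝ)] with s hs
    have hs0 : (0 : ℝ) < s := by linarith
    rw [Wb]
    positivity
  · filter_upwards [eventually_ge_atTop (1 : ℝ)] with s hs
    have hs0 : (0 : ℝ) < s := by linarith
    rw [Wb]
    have h1 : (s ^ 2 + 1) / (s * (2 * s ^ 2 + 3)) ≤ 1 := by
      rw [div_le_one (by positivity)]
      nlinarith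
    calc Real.exp (-s ^ 2) * ((s ^ 2 + 1) / (s * (2 * s ^ 2 + 3)))
        ≤ Real.exp (-s ^ 2) * 1 := by
          apply mul_le_mul_of_nonneg_left h1 (Real.exp_pos _).le
      _ = Real.exp (-s ^ 2) := by ring

lemma exp_neg_sq_integrableOn (t : ℝ) :
    IntegrableOn (fun s : ℝ => Real.exp (-s ^ 2)) (Set.Ioi t) := by
  have h := (integrable_exp_neg_mul_sq (b := 1) one_pos).integrableOn (s := Set.Ioi t)
  simpa using h

lemma Wb'_integrableOn {t : ℝ} (ht : 0 < t) : IntegrableOn Wb' (Set.Ioi t) := by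
  have hcont : ContinuousOn Wb' (Set.Ioi t) := by
    apply ContinuousOn.mul
    · exact ((Real.continuous_exp.comp (continuous_pow 2).neg).neg).continuousOn
    · apply ContinuousOn.add continuousOn_const
      apply ContinuousOn.div continuousOn_const
      · exact ((continuous_pow 2).mul (by continuity)).continuousOn
      · intro s hs
        have hs0 : 0 < s := ht.trans hs
        positivity
  have hbig : IntegrableOn (fun s : ℝ => (1 + 1 / (3 * t ^ 2)) * Real.exp (-s ^ 2))
      (Set.Ioi t) := (exp_neg_sq_integrableOn t).const_mul _
  refine Integrable.mono hbig (hcont.aestronglyMeasurable measurableSet_Ioi) ?_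
  rw [ae_restrict_iff' measurableSet_Ioi]
  filter_upwards with s hs
  have hs0 : 0 < s := ht.trans hs
  have he : 0 < Real.exp (-s ^ 2) := Real.exp_pos _
  have hfrac : 3 / (s ^ 2 * (2 * s ^ 2 + 3) ^ 2) ≤ 1 / (3 * t ^ 2) := by
    rw [div_le_div_iff₀ (by positivity) (by positivity)]
    have h1 : t ^ 2 ≤ s ^ 2 := by nlinarith [(Set.mem_Ioi.mp hs).le]
    have h2 : (9 : ℝ) ≤ (2 * s ^ 2 + 3) ^ 2 := by nlinarith [sq_nonneg s]
    nlinarith [mul_le_mul h1 h2 (by norm_num) (sq_nonneg s)]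
  have hfrac0 : 0 ≤ 3 / (s ^ 2 * (2 * s ^ 2 + 3) ^ 2) := by positivity
  rw [Wb', Real.norm_eq_abs, Real.norm_eq_abs]
  rw [abs_of_nonpos (by nlinarith), abs_of_nonneg (by positivity)]
  nlinarith

lemma integral_lt_Wb {t : ℝ} (ht : 0 < t) :
    (∫ s in Set.Ioi t, Real.exp (-s ^ 2)) < Wb t := by
  have hderiv : ∀ s ∈ Set.Ioi t, HasDerivAt Wb (Wb' s) s := fun s hs =>
    Wb_hasDeriv (ht.trans hs)
  have hcontW : ContinuousWithinAt Wb (Set.Ici t) t :=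
    ((Wb_hasDeriv ht).continuousAt).continuousWithinAt
  have hFTC : ∫ s in Set.Ioi t, Wb' s = 0 - Wb t :=
    integral_Ioi_of_hasDerivAt_of_tendsto hcontW hderiv (Wb'_integrableOn ht) Wb_tendsto
  have hIexp := exp_neg_sq_integrableOn t
  have hIW' := Wb'_integrableOn ht
  set f : ℝ → ℝ := fun s => -(Wb' s) - Real.exp (-s ^ 2) with hf
  have hfpos : ∀ s ∈ Set.Ioi t, 0 < f s := by
    intro s hs
    have hs0 : 0 < s := ht.trans hs
    have he : 0 < Real.exp (-s ^ 2) := Real.exp_pos _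
    have hfr : 0 < 3 / (s ^ 2 * (2 * s ^ 2 + 3) ^ 2) := by positivity
    simp only [hf, Wb']
    nlinarith
  have hfint : IntegrableOn f (Set.Ioi t) := hIW'.neg.sub hIexp
  have hpos : 0 < ∫ s in Set.Ioi t, f s := by
    have hae : 0 ≤ᵐ[volume.restrict (Set.Ioi t)] f := by
      rw [EventuallyLE, ae_restrict_iff' measurableSet_Ioi]
      filter_upwards with s hs
      exact (hfpos s hs).le
    rw [setIntegral_pos_iff_support_of_nonneg_ae hae hfint]
    apply lt_of_lt_of_le (b := volume (Set.Ioi t))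
    · simp [Real.volume_Ioi]
    · apply measure_mono
      intro s hs
      exact ⟨ne_of_gt (hfpos s hs), hs⟩
  have hneg : IntegrableOn (fun s => -Wb' s) (Set.Ioi t) := hIW'.neg
  have hsplit : ∫ s in Set.Ioi t, f s
      = Wb t - ∫ s in Set.Ioi t, Real.exp (-s ^ 2) := by
    rw [hf]
    rw [integral_sub hneg hIexp, integral_neg, hFTC]
    ring
  rw [hsplit] at hpos
  linarith

theorem erfc_mul_t_upper_bound (t : ℝ) (ht : 0 ≤ t) :
    Real.sqrt π * t * Real.exp (t ^ 2) * erfc t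
      < (2 * t ^ 2 + 2) / (2 * t ^ 2 + 3) := by
  rcases eq_or_lt_of_le ht with rfl | ht
  · simp [erfc]
  · have hsqrt : 0 < Real.sqrt π := Real.sqrt_pos.mpr Real.pi_pos
    have hI := integral_lt_Wb ht
    have hE : 0 < Real.exp (t ^ 2) := Real.exp_pos _
    have hL : Real.sqrt π * t * Real.exp (t ^ 2) * erfc t
        = 2 * t * Real.exp (t ^ 2) * ∫ s in Set.Ioi t, Real.exp (-s ^ 2) := by
      rw [erfc]
      field_simp
    rw [hL]
    have hW : 2 * t * Real.exp (t ^ 2) * Wb t = (2 * t ^ 2 + 2) / (2 * t ^ 2 + 3) := by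
      rw [Wb, Real.exp_neg]
      have := Real.exp_ne_zero (t ^ 2)
      field_simp
    calc 2 * t * Real.exp (t ^ 2) * ∫ s in Set.Ioi t, Real.exp (-s ^ 2)
        < 2 * t * Real.exp (t ^ 2) * Wb t := by
          apply mul_lt_mul_of_pos_left hI (by positivity)
      _ = (2 * t ^ 2 + 3)⁻¹ * (2 * t ^ 2 + 2) := by rw [hW]; ring_nf
      _ = (2 * t ^ 2 + 2) / (2 * t ^ 2 + 3) := by ring
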